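/- arXiv:1710.07540 — 4 statements merged into one kernel-verified Lean document; each statement's English description precedes it below -/
import Mathlib

section
/- Let M be a compact metric space, E a compact metric space, and let mᵏ be Borel probability measures on M × E converging to m in the weak* topology, all with the same projection μ onto M. Let φ : M × E → ℝ be a bounded measurable function such that for every ε > 0 there exists a compact set K ⊆ M with μ(K) > 1 − ε such that φ restricted to K × E is continuous. Then ∫ φ dmᵏ → ∫ φ dm. -/
open MeasureTheory Filter Set

/-- Convergence of integrals of a bounded measurable function which is continuous
on `K × E` for compact sets `K` of almost full measure, along a weak*-convergent
sequence of measures with common projection `μ`. -/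
theorem stmt_3 {M E : Type*} [MetricSpace M] [CompactSpace M]
    [MetricSpace E] [CompactSpace E]
    [MeasurableSpace M] [BorelSpace M] [MeasurableSpace E] [BorelSpace E]
    (μ : Measure M) [IsProbabilityMeasure μ]
    (mk : ℕ → Measure (M × E)) (m : Measure (M × E))
    [∀ k, IsProbabilityMeasure (mk k)] [IsProbabilityMeasure m]
    (hproj : ∀ k, (mk k).map Prod.fst = μ) (hprojm : m.map Prod.fst = μ)
    (hweak : ∀ ψ : C(M × E, ℝ),
      Tendsto (fun k => ∫ p, ψ p ∂(mk k)) atTop (nhds (∫ p, ψ p ∂m)))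
    (φ : M × E → ℝ) (hφmeas : Measurable φ) (hφbdd : ∃ C, ∀ p, |φ p| ≤ C)
    (hlusin : ∀ ε : ℝ, 0 < ε → ∃ K : Set M, IsCompact K ∧
      1 - ENNReal.ofReal ε < μ K ∧ ContinuousOn φ (K ×ˢ (univ : Set E))) :
    Tendsto (fun k => ∫ p, φ p ∂(mk k)) atTop (nhds (∫ p, φ p ∂m)) := by
  obtain ⟨C₀, hC₀⟩ := hφbdd
  set C : ℝ := max C₀ 0 with hCdef
  have hC : ∀ p, |φ p| ≤ C := fun p => (hC₀ p).trans (le_max_left _ _)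
  have hC0 : 0 ≤ C := le_max_right _ _
  rw [Metric.tendsto_atTop]
  intro ε hε
  set δ : ℝ := ε / (8 * (C + 1)) with hδdef
  have hCpos : (0:ℝ) < C + 1 := by linarith
  have hδ : 0 < δ := div_pos hε (by linarith)
  obtain ⟨K, hKc, hKμ, hKcont⟩ := hlusin δ hδ
  -- the closed set on which φ is continuous
  set s : Set (M × E) := K ×ˢ (univ : Set E) with hsdef
  have hscl : IsClosed s := (hKc.prod isCompact_univ).isClosed
  -- Tietze extension of φ from s
  obtain ⟨g, hg⟩ := (ContinuousMap.mk _ (hKcont.restrict (f := φ))).exists_restrict_eq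
    (Y := ℝ) hscl
  have hgs : ∀ p ∈ s, g p = φ p := by
    intro p hp
    have := congrArg (fun f => f ⟨p, hp⟩) hg
    simpa using this
  -- truncate g to get ψ with ‖ψ‖ ≤ C
  set ψ : C(M × E, ℝ) := ContinuousMap.mk (fun p => max (-C) (min C (g p)))
    (continuous_const.max (continuous_const.min g.continuous)) with hψdef
  have hψbd : ∀ p, |ψ p| ≤ C := by
    intro p
    rw [abs_le]
    constructor
    · exact le_max_left _ _
    · exact max_le (by linarith) (min_le_left _ _)
  have hψs : ∀ p ∈ s, ψ p = φ p := by
    intro p hp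
    have h1 := abs_le.1 (hC p)
    simp only [hψdef, ContinuousMap.coe_mk, hgs p hp]
    rw [min_eq_right h1.2, max_eq_right h1.1]
  -- measure of the complement of s
  have hμKc : μ Kᶜ ≤ ENNReal.ofReal δ := by
    have h1 : μ Kᶜ = 1 - μ K := prob_compl_eq_one_sub hKc.isClosed.measurableSet
    rw [h1, tsub_le_iff_left]
    by_contra h
    push_neg at h
    exact absurd hKμ (not_lt.2 (lt_tsub_iff_right.2 h).le)
  -- key estimate for any probability measure with projection μ
  have key : ∀ ν : Measure (M × E), IsProbabilityMeasure ν → ν.map Prod.fst = μ →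
      |(∫ p, φ p ∂ν) - ∫ p, ψ p ∂ν| ≤ 2 * C * δ := by
    intro ν hνprob hν
    haveI := hνprob
    have hφint : Integrable φ ν :=
      ⟨hφmeas.aestronglyMeasurable, HasFiniteIntegral.of_bounded (C := C)
        (Eventually.of_forall fun p => by simpa [Real.norm_eq_abs] using hC p)⟩
    have hψint : Integrable (fun p => ψ p) ν :=
      ⟨ψ.continuous.measurable.aestronglyMeasurable, HasFiniteIntegral.of_bounded (C := C)
        (Eventually.of_forall fun p => by simpa [Real.norm_eq_abs] using hψbd p)⟩
    have hsc : sᶜ = Prod.fst ⁻¹' Kᶜ := by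
      rw [hsdef, prod_univ, ← preimage_compl]
    have hνs : ν sᶜ ≤ ENNReal.ofReal δ := by
      rw [hsc, ← Measure.map_apply measurable_fst hKc.isClosed.measurableSet.compl, hν]
      exact hμKc
    have hsub : (∫ p, φ p ∂ν) - ∫ p, ψ p ∂ν = ∫ p in sᶜ, (φ p - ψ p) ∂ν := by
      rw [← integral_sub hφint hψint]
      exact (setIntegral_eq_integral_of_forall_compl_eq_zero fun p hp => by
        rw [notMem_compl_iff] at hp
        rw [hψs p hp, sub_self]).symm
    rw [hsub]
    calc |∫ p in sᶜ, (φ p - ψ p) ∂ν| ≤ (2 * C) * (ν sᶜ).toReal := by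
          rw [← Real.norm_eq_abs]
          apply norm_setIntegral_le_of_norm_le_const (lt_of_le_of_lt hνs (by simp))
          · intro p _
            have := hC p; have := hψbd p
            rw [Real.norm_eq_abs]
            calc |φ p - ψ p| ≤ |φ p| + |ψ p| := abs_sub _ _
              _ ≤ 2 * C := by linarith
      _ ≤ (2 * C) * δ := by
          apply mul_le_mul_of_nonneg_left _ (by linarith)
          exact ENNReal.toReal_le_of_le_ofReal hδ.le hνs
  -- conclude
  have hδbound : 2 * C * δ ≤ ε / 4 := by
    rw [hδdef, show (2:ℝ) * C * (ε / (8 * (C + 1))) = 2 * C * ε / (8 * (C + 1)) from by ring,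
      div_le_div_iff₀ (by linarith) (by norm_num)]
    nlinarith
  obtain ⟨N, hN⟩ := (Metric.tendsto_atTop.1 (hweak ψ)) (ε / 2) (by linarith)
  refine ⟨N, fun k hk => ?_⟩
  have h1 := key (mk k) inferInstance (hproj k)
  have h2 := key m inferInstance hprojm
  have h3 := hN k hk
  rw [Real.dist_eq] at h3 ⊢
  have t1 := abs_sub_le (∫ p, φ p ∂(mk k)) (∫ p, ψ p ∂(mk k)) (∫ p, φ p ∂m)
  have t2 := abs_sub_le (∫ p, ψ p ∂(mk k)) (∫ p, ψ p ∂m) (∫ p, φ p ∂m)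
  have h2' : |(∫ p, ψ p ∂m) - ∫ p, φ p ∂m| ≤ 2 * C * δ := by
    rw [abs_sub_comm]; exact h2
  linarith
end

section
/- Let M, E be compact metric spaces and let mᵏ, m be Borel probability measures on M × E with mᵏ → m weak* and with common projection μ on M. Let Hₖ, H : M × E → M × E be measurable maps of the form Hₖ(x, v) = (x, hₖ(x, v)) and H(x, v) = (x, h(x, v)) such that hₖ → h uniformly on M × E and, for each fixed x, v ↦ h(x, v) is continuous, and x ↦ h(x, ·) satisfies the Lusin condition (for every ε > 0 there is compact K ⊆ M with μ(K) > 1 − ε on which H is continuous). Then (Hₖ)∗mᵏ → H∗m in the weak* topology. -/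
/-!
The difference `∫ ψ ∘ Hₖ dmᵏ - ∫ ψ ∘ H dmᵏ` tends to zero because `ψ` is uniformly continuous
and `Hₖ → H` uniformly, so it remains to show `∫ ψ ∘ H dmᵏ → ∫ ψ ∘ H dm`.
By the Lusin condition `ψ ∘ H` is continuous on `K × E` for a compact `K` of `μ`-measure close
to one. A Tietze extension `g` of it with the same bound `‖ψ‖` differs from `ψ ∘ H` only on
`Kᶜ × E`, which is small for every `mᵏ` and for `m` because they all project to `μ`; weak*
convergence applied to `g` then gives the claim up to an arbitrarily small error.
-/

open MeasureTheory Filter Set Topology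

lemma tendsto_of_forall_approx {ι α : Type*} [PseudoMetricSpace α] {l : Filter ι}
    {a : ι → α} {b : α}
    (happrox : ∀ η > 0, ∃ (c : ι → α) (d : α), Tendsto c l (𝓝 d) ∧
      (∀ i, dist (a i) (c i) ≤ η) ∧ dist d b ≤ η) :
    Tendsto a l (𝓝 b) := by
  rw [Metric.tendsto_nhds]
  intro ε hε
  obtain ⟨c, d, hcd, hac, hdb⟩ := happrox (ε / 3) (by positivity)
  filter_upwards [Metric.tendsto_nhds.mp hcd (ε / 3) (by positivity)] with i hci
  calc dist (a i) b ≤ dist (a i) (c i) + dist (c i) d + dist d b := dist_triangle4 _ _ _ _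
    _ < ε := by linarith [hac i]

lemma ContinuousMap.exists_eqOn_abs_le {X : Type*} [TopologicalSpace X] [NormalSpace X]
    {s : Set X} (hs : IsClosed s) {G : X → ℝ} (hG : ContinuousOn G s) {C : ℝ} (hC : 0 ≤ C)
    (hGC : ∀ x ∈ s, |G x| ≤ C) :
    ∃ g : C(X, ℝ), EqOn g G s ∧ ∀ x, |g x| ≤ C := by
  obtain ⟨g, hgC, hgG⟩ := ContinuousMap.exists_restrict_eq_forall_mem_of_closed
    ⟨s.domRestrict G, hG.domRestrict⟩ (t := Icc (-C) C)
    (fun x => abs_le.mp (hGC x x.2)) ⟨0, by simp [hC]⟩ hs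
  exact ⟨g, fun x hx => congr($hgG ⟨x, hx⟩), fun x => abs_le.mpr (hgC x)⟩

section Integrals

variable {X : Type*} [MeasurableSpace X]

lemma ContinuousMap.integrable_comp {Y : Type*} [TopologicalSpace Y] [CompactSpace Y]
    [MeasurableSpace Y] [OpensMeasurableSpace Y] (ψ : C(Y, ℝ)) {F : X → Y} (hF : Measurable F)
    (ν : Measure X) [IsFiniteMeasure ν] :
    Integrable (fun x => ψ (F x)) ν :=
  .of_bound (ψ.continuous.measurable.comp hF).aestronglyMeasurable ‖ψ‖
    (ae_of_all _ fun x => ψ.norm_coe_le_norm (F x))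

lemma abs_integral_sub_le_of_eqOn {ν : Measure X} [IsFiniteMeasure ν] {f g : X → ℝ}
    (hf : Integrable f ν) (hg : Integrable g ν) {s : Set X} (hfg : EqOn f g s) {D : ℝ}
    (hD : ∀ x, |f x - g x| ≤ D) :
    |∫ x, f x ∂ν - ∫ x, g x ∂ν| ≤ D * ν.real sᶜ := by
  have hcompl : ∫ x in sᶜ, (f x - g x) ∂ν = ∫ x, (f x - g x) ∂ν :=
    setIntegral_eq_integral_of_forall_compl_eq_zero fun x hx => by
      rw [hfg (not_not.mp hx), sub_self]
  rw [← integral_sub hf hg, ← hcompl]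
  exact norm_setIntegral_le_of_norm_le_const (measure_lt_top ν _) fun x _ =>
    (Real.norm_eq_abs _).trans_le (hD x)

lemma tendsto_integral_sub_of_tendstoUniformly {ι : Type*} {l : Filter ι} {ν : ι → Measure X}
    [∀ i, IsProbabilityMeasure (ν i)] {f : ι → X → ℝ} {g : X → ℝ}
    (hf : ∀ i, Integrable (f i) (ν i)) (hg : ∀ i, Integrable g (ν i))
    (hfg : TendstoUniformly f g l) :
    Tendsto (fun i => ∫ x, f i x ∂(ν i) - ∫ x, g x ∂(ν i)) l (𝓝 0) := by
  rw [Metric.tendsto_nhds]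
  intro ε hε
  filter_upwards [Metric.tendstoUniformly_iff.mp hfg (ε / 2) (by positivity)] with i hi
  rw [dist_zero_right, ← integral_sub (hf i) (hg i)]
  calc ‖∫ x, (f i x - g x) ∂(ν i)‖ ≤ ε / 2 * (ν i).real univ :=
        norm_integral_le_of_norm_le_const <| ae_of_all _ fun x => by
          rw [← dist_eq_norm, dist_comm]; exact (hi x).le
    _ < ε := by rw [probReal_univ]; linarith

lemma tendsto_integral_of_continuousOn_of_measureReal_compl_le [TopologicalSpace X]
    [NormalSpace X] [OpensMeasurableSpace X] {ν : ℕ → Measure X} {ν' : Measure X}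
    [∀ k, IsFiniteMeasure (ν k)] [IsFiniteMeasure ν']
    (hweak : ∀ g : C(X, ℝ),
      Tendsto (fun k => ∫ x, g x ∂(ν k)) atTop (𝓝 (∫ x, g x ∂ν')))
    {G : X → ℝ} (hG : Measurable G) {C : ℝ} (hC : 0 ≤ C) (hGC : ∀ x, |G x| ≤ C)
    (hsmall : ∀ η > 0, ∃ s, IsClosed s ∧ ContinuousOn G s ∧
      (∀ k, (ν k).real sᶜ ≤ η) ∧ ν'.real sᶜ ≤ η) :
    Tendsto (fun k => ∫ x, G x ∂(ν k)) atTop (𝓝 (∫ x, G x ∂ν')) := by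
  refine tendsto_of_forall_approx fun η hη => ?_
  obtain ⟨s, hs, hGs, hνs, hν's⟩ := hsmall (η / (2 * C + 1)) (by positivity)
  obtain ⟨g, hgG, hgC⟩ := ContinuousMap.exists_eqOn_abs_le hs hGs hC fun x _ => hGC x
  have hGg : ∀ x, |G x - g x| ≤ 2 * C := fun x => by
    linarith [abs_sub (G x) (g x), hGC x, hgC x]
  have happrox : ∀ (ρ : Measure X) [IsFiniteMeasure ρ], ρ.real sᶜ ≤ η / (2 * C + 1) →
      |∫ x, G x ∂ρ - ∫ x, g x ∂ρ| ≤ η := fun ρ _ hρ =>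
    calc |∫ x, G x ∂ρ - ∫ x, g x ∂ρ| ≤ 2 * C * ρ.real sᶜ :=
          abs_integral_sub_le_of_eqOn
            (.of_bound hG.aestronglyMeasurable C (ae_of_all _ hGC))
            (.of_bound g.continuous.aestronglyMeasurable C (ae_of_all _ hgC)) hgG.symm hGg
      _ ≤ (2 * C + 1) * (η / (2 * C + 1)) := by gcongr; linarith
      _ = η := by field_simp
  refine ⟨fun k => ∫ x, g x ∂(ν k), ∫ x, g x ∂ν', hweak g, fun k => ?_, ?_⟩
  · rw [Real.dist_eq]; exact happrox _ (hνs k)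
  · rw [Real.dist_eq, abs_sub_comm]; exact happrox _ hν's

end Integrals

lemma measureReal_compl_prod_univ_le {M E : Type*} [MeasurableSpace M] [MeasurableSpace E]
    {μ : Measure M} [IsProbabilityMeasure μ] {ν : Measure (M × E)} (hν : ν.map Prod.fst = μ)
    {K : Set M} (hK : MeasurableSet K) {ε : ℝ} (hε : 0 ≤ ε)
    (hμK : 1 - ENNReal.ofReal ε < μ K) :
    ν.real (K ×ˢ univ)ᶜ ≤ ε := by
  have hμKc : μ Kᶜ ≤ ENNReal.ofReal ε := by
    rw [prob_compl_eq_one_sub hK, tsub_le_iff_right]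
    exact tsub_le_iff_left.mp hμK.le
  rw [prod_univ, ← preimage_compl, measureReal_def,
    ← Measure.map_apply measurable_fst hK.compl, hν]
  exact ENNReal.toReal_le_of_le_ofReal hε hμKc

theorem stmt_5_general {M E : Type*} [MetricSpace M] [CompactSpace M]
    [MetricSpace E] [CompactSpace E]
    [MeasurableSpace M] [BorelSpace M] [MeasurableSpace E] [BorelSpace E]
    (μ : Measure M) [IsProbabilityMeasure μ]
    (mk : ℕ → Measure (M × E)) (m : Measure (M × E))
    [∀ k, IsProbabilityMeasure (mk k)] [IsProbabilityMeasure m]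
    (hproj : ∀ k, (mk k).map Prod.fst = μ) (hprojm : m.map Prod.fst = μ)
    (hweak : ∀ ψ : C(M × E, ℝ),
      Tendsto (fun k => ∫ p, ψ p ∂(mk k)) atTop (nhds (∫ p, ψ p ∂m)))
    (hk : ℕ → M → E → E) (h : M → E → E)
    (hkmeas : ∀ k, Measurable fun p : M × E => (p.1, hk k p.1 p.2))
    (hmeas : Measurable fun p : M × E => (p.1, h p.1 p.2))
    (hunif : ∀ ε : ℝ, 0 < ε → ∃ N, ∀ k ≥ N, ∀ p : M × E,
      dist ((p.1, hk k p.1 p.2) : M × E) (p.1, h p.1 p.2) < ε)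
    (hlusin : ∀ ε : ℝ, 0 < ε → ∃ K : Set M, IsCompact K ∧
      1 - ENNReal.ofReal ε < μ K ∧
      ContinuousOn (fun p : M × E => ((p.1, h p.1 p.2) : M × E))
        (K ×ˢ (univ : Set E))) :
    ∀ ψ : C(M × E, ℝ),
      Tendsto (fun k => ∫ p, ψ ((p.1, hk k p.1 p.2) : M × E) ∂(mk k)) atTop
        (nhds (∫ p, ψ ((p.1, h p.1 p.2) : M × E) ∂m)) := by
  intro ψ
  have hHk : TendstoUniformly (fun k (p : M × E) => (p.1, hk k p.1 p.2))
      (fun p => (p.1, h p.1 p.2)) atTop :=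
    Metric.tendstoUniformly_iff.mpr fun ε hε => by
      obtain ⟨N, hN⟩ := hunif ε hε
      exact eventually_atTop.mpr ⟨N, fun k hk p => dist_comm (α := M × E) _ _ ▸ hN k hk p⟩
  have hnear : Tendsto (fun k => ∫ p, ψ (p.1, hk k p.1 p.2) ∂(mk k) -
      ∫ p, ψ (p.1, h p.1 p.2) ∂(mk k)) atTop (𝓝 0) :=
    tendsto_integral_sub_of_tendstoUniformly (fun k => ψ.integrable_comp (hkmeas k) _)
      (fun k => ψ.integrable_comp hmeas _)
      ((CompactSpace.uniformContinuous_of_continuous ψ.continuous).comp_tendstoUniformly hHk)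
  have hlimit : Tendsto (fun k => ∫ p, ψ (p.1, h p.1 p.2) ∂(mk k)) atTop
      (𝓝 (∫ p, ψ (p.1, h p.1 p.2) ∂m)) := by
    refine tendsto_integral_of_continuousOn_of_measureReal_compl_le hweak
      (ψ.continuous.measurable.comp hmeas) (norm_nonneg ψ)
      (fun p => ψ.norm_coe_le_norm _) fun η hη => ?_
    obtain ⟨K, hK, hμK, hHK⟩ := hlusin η hη
    exact ⟨K ×ˢ univ, hK.isClosed.prod isClosed_univ, ψ.continuous.comp_continuousOn hHK,
      fun k => measureReal_compl_prod_univ_le (hproj k) hK.measurableSet hη.le hμK,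
      measureReal_compl_prod_univ_le hprojm hK.measurableSet hη.le hμK⟩
  simpa using hnear.add hlimit

/-- If `mᵏ → m` weak* with common projection `μ`, and fiberwise maps `Hₖ → H`
uniformly with `H` continuous on `K × E` for compact `K` of almost full measure,
then `(Hₖ)₊mᵏ → H₊m` weak*. -/
theorem stmt_5 {M E : Type*} [MetricSpace M] [CompactSpace M]
    [MetricSpace E] [CompactSpace E]
    [MeasurableSpace M] [BorelSpace M] [MeasurableSpace E] [BorelSpace E]
    (μ : Measure M) [IsProbabilityMeasure μ]
    (mk : ℕ → Measure (M × E)) (m : Measure (M × E))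
    [∀ k, IsProbabilityMeasure (mk k)] [IsProbabilityMeasure m]
    (hproj : ∀ k, (mk k).map Prod.fst = μ) (hprojm : m.map Prod.fst = μ)
    (hweak : ∀ ψ : C(M × E, ℝ),
      Tendsto (fun k => ∫ p, ψ p ∂(mk k)) atTop (nhds (∫ p, ψ p ∂m)))
    (hk : ℕ → M → E → E) (h : M → E → E)
    (hkmeas : ∀ k, Measurable fun p : M × E => (p.1, hk k p.1 p.2))
    (hmeas : Measurable fun p : M × E => (p.1, h p.1 p.2))
    (hunif : ∀ ε : ℝ, 0 < ε → ∃ N, ∀ k ≥ N, ∀ p : M × E,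
      dist ((p.1, hk k p.1 p.2) : M × E) (p.1, h p.1 p.2) < ε)
    (hfibercont : ∀ x, Continuous fun v => h x v)
    (hlusin : ∀ ε : ℝ, 0 < ε → ∃ K : Set M, IsCompact K ∧
      1 - ENNReal.ofReal ε < μ K ∧
      ContinuousOn (fun p : M × E => ((p.1, h p.1 p.2) : M × E))
        (K ×ˢ (univ : Set E))) :
    ∀ ψ : C(M × E, ℝ),
      Tendsto (fun k => ∫ p, ψ ((p.1, hk k p.1 p.2) : M × E) ∂(mk k)) atTop
        (nhds (∫ p, ψ ((p.1, h p.1 p.2) : M × E) ∂m)) :=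
  stmt_5_general μ mk m hproj hprojm hweak hk h hkmeas hmeas hunif hlusin
end

section
/- Let M, E be compact metric spaces, μ a Borel probability measure on M, and mᵏ, m Borel probability measures on M × E with projection μ, mᵏ → m weak*, and disintegrations x ↦ mᵏ_x, x ↦ m_x. Let B₀ be a sub-σ-algebra of the Borel σ-algebra of M. If for every k and every continuous φ : E → ℝ the map x ↦ ∫ φ dmᵏ_x is (a.e. equal to) a B₀-measurable function, then for every continuous φ : E → ℝ the map x ↦ ∫ φ dm_x is a.e. equal to a B₀-measurable function. -/
/-!
Write `F x = ∫ φ dm_x`, `Fₖ x = ∫ φ dmᵏ_x` and `g = 𝔼[F | B₀]`. Testing the weak* convergence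
against `ρ(x) φ(v)` and disintegrating gives `∫ ρ Fₖ dμ → ∫ ρ F dμ` for continuous `ρ`, and since
the `Fₖ` are uniformly bounded this extends by density to every integrable `ρ`. Now `F - g` is
orthogonal to every bounded `B₀`-measurable function, in particular to each `Fₖ` and to `g`;
passing to the limit it is also orthogonal to `F`, so `∫ (F - g)² dμ = 0` and `F = g` a.e.
-/

open MeasureTheory Filter Topology
open scoped BoundedContinuousFunction

theorem tendsto_of_forall_approx_s7 {ι : Type*} {l : Filter ι} {a : ι → ℝ} {A : ℝ}
    (h : ∀ ε > 0, ∃ (b : ι → ℝ) (B : ℝ), Tendsto b l (𝓝 B) ∧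
      (∀ i, |a i - b i| ≤ ε) ∧ |A - B| ≤ ε) :
    Tendsto a l (𝓝 A) := by
  refine Metric.tendsto_nhds.mpr fun ε hε => ?_
  obtain ⟨b, B, hbB, hab, hAB⟩ := h (ε / 4) (by positivity)
  filter_upwards [Metric.tendsto_nhds.mp hbB (ε / 4) (by positivity)] with i hbi
  rw [Real.dist_eq] at hbi ⊢
  linarith [hab i, abs_sub_le (a i) (b i) B, abs_sub_le (a i) B A, abs_sub_comm A B]

section

variable {α : Type*} {m m₀ : MeasurableSpace α} {μ : Measure α}

theorem abs_integral_mul_sub_integral_mul_le {σ ρ G : α → ℝ} {C : ℝ}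
    (hσ : Integrable σ μ) (hρ : Integrable ρ μ) (hG : AEStronglyMeasurable G μ)
    (hGC : ∀ᵐ x ∂μ, ‖G x‖ ≤ C) :
    |∫ x, σ x * G x ∂μ - ∫ x, ρ x * G x ∂μ| ≤ C * ∫ x, ‖σ x - ρ x‖ ∂μ := by
  rw [← integral_sub (hσ.mul_bdd hG hGC) (hρ.mul_bdd hG hGC), ← integral_const_mul,
    ← Real.norm_eq_abs]
  refine norm_integral_le_of_norm_le ((hσ.sub hρ).norm.const_mul C) ?_
  filter_upwards [hGC] with x hx
  rw [← sub_mul, norm_mul, mul_comm]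
  exact mul_le_mul_of_nonneg_right hx (norm_nonneg _)

theorem tendsto_integral_mul_of_tendsto_integral_boundedContinuous_mul [TopologicalSpace α]
    [NormalSpace α] [BorelSpace α] [μ.WeaklyRegular] {ι : Type*} {l : Filter ι}
    {G : ι → α → ℝ} {F : α → ℝ} {C : ℝ}
    (hG : ∀ k, AEStronglyMeasurable (G k) μ) (hGC : ∀ k, ∀ᵐ x ∂μ, ‖G k x‖ ≤ C)
    (hF : AEStronglyMeasurable F μ) (hFC : ∀ᵐ x ∂μ, ‖F x‖ ≤ C)
    (hlim : ∀ ρ : α →ᵇ ℝ,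
      Tendsto (fun k => ∫ x, ρ x * G k x ∂μ) l (𝓝 (∫ x, ρ x * F x ∂μ)))
    {σ : α → ℝ} (hσ : Integrable σ μ) :
    Tendsto (fun k => ∫ x, σ x * G k x ∂μ) l (𝓝 (∫ x, σ x * F x ∂μ)) := by
  refine tendsto_of_forall_approx_s7 fun ε hε => ?_
  obtain ⟨ρ, hσρ, hρ⟩ := hσ.exists_boundedContinuous_integral_sub_le
    (show 0 < ε / (|C| + 1) by positivity)
  have approx : ∀ H : α → ℝ, AEStronglyMeasurable H μ → (∀ᵐ x ∂μ, ‖H x‖ ≤ C) →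
      |∫ x, σ x * H x ∂μ - ∫ x, ρ x * H x ∂μ| ≤ ε := fun H hH hHC =>
    calc _ ≤ C * ∫ x, ‖σ x - ρ x‖ ∂μ := abs_integral_mul_sub_integral_mul_le hσ hρ hH hHC
      _ ≤ |C| * (ε / (|C| + 1)) :=
        mul_le_mul (le_abs_self C) hσρ (integral_nonneg fun _ => norm_nonneg _) (abs_nonneg C)
      _ ≤ ε := by
        rw [mul_div_assoc', div_le_iff₀ (by positivity)]
        nlinarith [abs_nonneg C]
  exact ⟨_, _, hlim ρ, fun k => approx (G k) (hG k) (hGC k), approx F hF hFC⟩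

theorem integral_condExp_mul_eq_integral_mul [IsFiniteMeasure μ] (hm : m ≤ m₀)
    {f h : α → ℝ} {C : ℝ} (hf : Integrable f μ) (hh : AEStronglyMeasurable[m] h μ)
    (hhC : ∀ᵐ x ∂μ, ‖h x‖ ≤ C) :
    ∫ x, μ[f|m] x * h x ∂μ = ∫ x, f x * h x ∂μ := by
  have := isFiniteMeasure_trim (μ := μ) hm
  simp_rw [mul_comm _ (h _)]
  calc ∫ x, h x * μ[f|m] x ∂μ = ∫ x, μ[h * f|m] x ∂μ :=
        integral_congr_ae (condExp_stronglyMeasurable_mul_of_bound₀ hm hh hf C hhC).symm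
    _ = ∫ x, h x * f x ∂μ := integral_condExp hm

theorem integral_sub_condExp_mul_eq_zero [IsFiniteMeasure μ] (hm : m ≤ m₀)
    {f h : α → ℝ} {C : ℝ} (hf : Integrable f μ) (hh : AEStronglyMeasurable[m] h μ)
    (hhC : ∀ᵐ x ∂μ, ‖h x‖ ≤ C) :
    ∫ x, (f x - μ[f|m] x) * h x ∂μ = 0 := by
  have hh₀ : AEStronglyMeasurable h μ := hh.mono hm
  simp_rw [sub_mul]
  rw [integral_sub (hf.mul_bdd hh₀ hhC) (integrable_condExp.mul_bdd hh₀ hhC),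
    integral_condExp_mul_eq_integral_mul hm hf hh hhC, sub_self]

theorem aestronglyMeasurable_of_tendsto_integral_mul [IsFiniteMeasure μ] (hm : m ≤ m₀)
    {ι : Type*} {l : Filter ι} [l.NeBot] {G : ι → α → ℝ} {F : α → ℝ} {C : ℝ}
    (hG : ∀ k, AEStronglyMeasurable[m] (G k) μ) (hGC : ∀ k, ∀ᵐ x ∂μ, ‖G k x‖ ≤ C)
    (hF : AEStronglyMeasurable F μ) (hFC : ∀ᵐ x ∂μ, ‖F x‖ ≤ C)
    (hlim : ∀ σ : α → ℝ, Integrable σ μ →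
      Tendsto (fun k => ∫ x, σ x * G k x ∂μ) l (𝓝 (∫ x, σ x * F x ∂μ))) :
    AEStronglyMeasurable[m] F μ := by
  set g := μ[F|m]
  have hFint : Integrable F μ := .of_bound hF C hFC
  have hgC : ∀ᵐ x ∂μ, ‖g x‖ ≤ C := by
    simp only [Real.norm_eq_abs] at hFC ⊢
    exact ae_bdd_abs_condExp_of_ae_bdd_abs hFC
  have hg : AEStronglyMeasurable g μ :=
    stronglyMeasurable_condExp.aestronglyMeasurable.mono hm
  have hFg : Integrable (fun x => F x - g x) μ := hFint.sub integrable_condExp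
  have hF_Gk : ∀ k, ∫ x, (F x - g x) * G k x ∂μ = 0 := fun k =>
    integral_sub_condExp_mul_eq_zero hm hFint (hG k) (hGC k)
  have hF_F : ∫ x, (F x - g x) * F x ∂μ = 0 := by
    refine tendsto_nhds_unique (hlim _ hFg) ?_
    simp_rw [hF_Gk]
    exact tendsto_const_nhds
  have hF_g : ∫ x, (F x - g x) * g x ∂μ = 0 :=
    integral_sub_condExp_mul_eq_zero hm hFint stronglyMeasurable_condExp.aestronglyMeasurable hgC
  have hsq : ∫ x, (F x - g x) * (F x - g x) ∂μ = 0 := by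
    simp_rw [mul_sub]
    rw [integral_sub (hFg.mul_bdd hF hFC) (hFg.mul_bdd hg hgC), hF_F, hF_g, sub_zero]
  have hFgC : ∀ᵐ x ∂μ, ‖F x - g x‖ ≤ C + C := by
    filter_upwards [hFC, hgC] with x h₁ h₂ using (norm_sub_le _ _).trans (add_le_add h₁ h₂)
  refine ⟨g, stronglyMeasurable_condExp, ?_⟩
  filter_upwards [(integral_eq_zero_iff_of_nonneg (fun x => mul_self_nonneg (F x - g x))
    (hFg.mul_bdd (hF.sub hg) hFgC)).mp hsq] with x hx
  simpa [sub_eq_zero] using hx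

end

theorem Measurable.stronglyMeasurable_integral {X Y G : Type*} [MeasurableSpace X]
    [MeasurableSpace Y] [NormedAddCommGroup G] [NormedSpace ℝ G] {ν : X → Measure Y}
    (hν : Measurable ν) {f : Y → G} (hf : StronglyMeasurable f) :
    StronglyMeasurable fun x => ∫ y, f y ∂ν x :=
  hf.integral_kernel (κ := ⟨ν, hν⟩)

theorem ContinuousMap.norm_integral_le_norm {Y : Type*} [TopologicalSpace Y] [CompactSpace Y]
    [MeasurableSpace Y] [OpensMeasurableSpace Y] (ν : Measure Y) [IsProbabilityMeasure ν]
    (φ : C(Y, ℝ)) : ‖∫ y, φ y ∂ν‖ ≤ ‖φ‖ := by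
  simpa using (BoundedContinuousFunction.mkOfCompact φ).norm_integral_le_norm ν

theorem stmt_7_general {M E : Type*} [MetricSpace M]
    [MetricSpace E] [CompactSpace E]
    [mM : MeasurableSpace M] [BorelSpace M] [MeasurableSpace E] [BorelSpace E]
    (μ : Measure M) [IsProbabilityMeasure μ]
    (mk : ℕ → Measure (M × E)) (m : Measure (M × E))
    (hweak : ∀ ψ : C(M × E, ℝ),
      Tendsto (fun k => ∫ p, ψ p ∂(mk k)) atTop (nhds (∫ p, ψ p ∂m)))
    (mkx : ℕ → M → Measure E) (mx : M → Measure E)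
    (hmkx : ∀ k, Measurable (mkx k)) (hmx : Measurable mx)
    (hkprob : ∀ k x, IsProbabilityMeasure (mkx k x))
    (hprob : ∀ x, IsProbabilityMeasure (mx x))
    (hdisintk : ∀ k (ρ : M → ℝ), Measurable ρ → (∃ C, ∀ x, |ρ x| ≤ C) →
      ∀ φ : C(E, ℝ),
        ∫ p, ρ p.1 * φ p.2 ∂(mk k) = ∫ x, ρ x * ∫ v, φ v ∂(mkx k x) ∂μ)
    (hdisint : ∀ ρ : M → ℝ, Measurable ρ → (∃ C, ∀ x, |ρ x| ≤ C) →
      ∀ φ : C(E, ℝ),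
        ∫ p, ρ p.1 * φ p.2 ∂m = ∫ x, ρ x * ∫ v, φ v ∂(mx x) ∂μ)
    (B0 : MeasurableSpace M) (hB0 : B0 ≤ mM)
    (hB0meas : ∀ k, ∀ φ : C(E, ℝ), ∃ g : M → ℝ, Measurable[B0] g ∧
      ∀ᵐ x ∂μ, g x = ∫ v, φ v ∂(mkx k x)) :
    ∀ φ : C(E, ℝ), ∃ g : M → ℝ, Measurable[B0] g ∧
      ∀ᵐ x ∂μ, g x = ∫ v, φ v ∂(mx x) := by
  intro φ
  -- `B0` is a local instance too; make the Borel σ-algebra the one instance search finds.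
  let _ : MeasurableSpace M := mM
  have hφ : StronglyMeasurable φ := φ.continuous.stronglyMeasurable
  have hFk k : AEStronglyMeasurable (fun x => ∫ v, φ v ∂(mkx k x)) μ :=
    ((hmkx k).stronglyMeasurable_integral hφ).aestronglyMeasurable
  have hF : AEStronglyMeasurable (fun x => ∫ v, φ v ∂(mx x)) μ :=
    (hmx.stronglyMeasurable_integral hφ).aestronglyMeasurable
  have hFk_le k : ∀ᵐ x ∂μ, ‖∫ v, φ v ∂(mkx k x)‖ ≤ ‖φ‖ :=
    .of_forall fun x => have := hkprob k x; φ.norm_integral_le_norm _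
  have hF_le : ∀ᵐ x ∂μ, ‖∫ v, φ v ∂(mx x)‖ ≤ ‖φ‖ :=
    .of_forall fun x => have := hprob x; φ.norm_integral_le_norm _
  have hlim (ρ : M →ᵇ ℝ) : Tendsto (fun k => ∫ x, ρ x * ∫ v, φ v ∂(mkx k x) ∂μ) atTop
      (𝓝 (∫ x, ρ x * ∫ v, φ v ∂(mx x) ∂μ)) := by
    have hρ : ∃ C, ∀ x, |ρ x| ≤ C := ⟨‖ρ‖, fun x => by simpa using ρ.norm_coe_le_norm x⟩
    simp_rw [← hdisintk _ ρ ρ.continuous.measurable hρ φ,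
      ← hdisint ρ ρ.continuous.measurable hρ φ]
    exact hweak ((ρ.toContinuousMap.comp .fst) * φ.comp .snd)
  have hFk_B0 k : AEStronglyMeasurable[B0] (fun x => ∫ v, φ v ∂(mkx k x)) μ := by
    obtain ⟨g, hg, hg_eq⟩ := hB0meas k φ
    exact ⟨g, hg.stronglyMeasurable, hg_eq.mono fun x hx => hx.symm⟩
  obtain ⟨g, hg, hg_eq⟩ := aestronglyMeasurable_of_tendsto_integral_mul hB0 hFk_B0 hFk_le hF hF_le
    fun σ hσ => tendsto_integral_mul_of_tendsto_integral_boundedContinuous_mul hFk hFk_le hF hF_le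
      hlim hσ
  exact ⟨g, hg.measurable, hg_eq.symm⟩

/-- If `mᵏ → m` weak*, all projecting to `μ`, and for every `k` the fiber
integrals `x ↦ ∫ φ dmᵏ_x` are a.e. `B₀`-measurable, then so are the fiber
integrals of the limit `m`. -/
theorem stmt_7 {M E : Type*} [MetricSpace M] [CompactSpace M]
    [MetricSpace E] [CompactSpace E]
    [mM : MeasurableSpace M] [BorelSpace M] [MeasurableSpace E] [BorelSpace E]
    (μ : Measure M) [IsProbabilityMeasure μ]
    (mk : ℕ → Measure (M × E)) (m : Measure (M × E))
    [∀ k, IsProbabilityMeasure (mk k)] [IsProbabilityMeasure m]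
    (hproj : ∀ k, (mk k).map Prod.fst = μ) (hprojm : m.map Prod.fst = μ)
    (hweak : ∀ ψ : C(M × E, ℝ),
      Tendsto (fun k => ∫ p, ψ p ∂(mk k)) atTop (nhds (∫ p, ψ p ∂m)))
    (mkx : ℕ → M → Measure E) (mx : M → Measure E)
    (hmkx : ∀ k, Measurable (mkx k)) (hmx : Measurable mx)
    (hkprob : ∀ k x, IsProbabilityMeasure (mkx k x))
    (hprob : ∀ x, IsProbabilityMeasure (mx x))
    (hdisintk : ∀ k (ρ : M → ℝ), Measurable ρ → (∃ C, ∀ x, |ρ x| ≤ C) →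
      ∀ φ : C(E, ℝ),
        ∫ p, ρ p.1 * φ p.2 ∂(mk k) = ∫ x, ρ x * ∫ v, φ v ∂(mkx k x) ∂μ)
    (hdisint : ∀ ρ : M → ℝ, Measurable ρ → (∃ C, ∀ x, |ρ x| ≤ C) →
      ∀ φ : C(E, ℝ),
        ∫ p, ρ p.1 * φ p.2 ∂m = ∫ x, ρ x * ∫ v, φ v ∂(mx x) ∂μ)
    (B0 : MeasurableSpace M) (hB0 : B0 ≤ mM)
    (hB0meas : ∀ k, ∀ φ : C(E, ℝ), ∃ g : M → ℝ, Measurable[B0] g ∧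
      ∀ᵐ x ∂μ, g x = ∫ v, φ v ∂(mkx k x)) :
    ∀ φ : C(E, ℝ), ∃ g : M → ℝ, Measurable[B0] g ∧
      ∀ᵐ x ∂μ, g x = ∫ v, φ v ∂(mx x) :=
  stmt_7_general (mM := mM) μ mk m hweak mkx mx hmkx hmx hkprob hprob hdisintk hdisint B0 hB0
    hB0meas
end

section
/- Let M, E be compact metric spaces, μ a Borel probability measure on M, and mᵏ, m Borel probability measures on M × E with common projection μ such that mᵏ → m weak*. Then for every ρ ∈ L²(μ) and every continuous φ : E → ℝ, ∫_{M×E} ρ(x)φ(v) dmᵏ(x,v) → ∫_{M×E} ρ(x)φ(v) dm(x,v). -/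
open MeasureTheory Filter Topology
open scoped BoundedContinuousFunction

/-! Since every `mᵏ` and `m` projects to `μ`, replacing `ρ` by `g` changes
`∫ ρ(x) φ(v) dmᵏ` by at most `‖φ‖_∞ ‖ρ - g‖_{L¹(μ)}`, uniformly in `k`. Bounded continuous
`g` are dense in `L¹(μ)`, and for them `g(x) φ(v)` is a continuous test function, so
weak* convergence applies; the uniform error bound lets the limit pass from `g` to `ρ`. -/

namespace MeasureTheory

variable {M E : Type*} [MeasurableSpace M] [MeasurableSpace E]
  {μ : Measure M} {ν : Measure (M × E)} {φ : E → ℝ} {C : ℝ}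

theorem Integrable.comp_fst_of_map_fst_eq (hν : ν.map Prod.fst = μ) {f : M → ℝ}
    (hf : Integrable f μ) : Integrable (fun p : M × E => f p.1) ν := by
  rw [← hν] at hf
  exact hf.comp_measurable measurable_fst

theorem integral_comp_fst_of_map_fst_eq (hν : ν.map Prod.fst = μ) {f : M → ℝ}
    (hf : AEStronglyMeasurable f μ) : ∫ p, f p.1 ∂ν = ∫ x, f x ∂μ := by
  rw [← hν] at hf ⊢
  exact (integral_map measurable_fst.aemeasurable hf).symm

theorem Integrable.comp_fst_mul_comp_snd (hν : ν.map Prod.fst = μ) {f : M → ℝ}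
    (hf : Integrable f μ) (hφm : Measurable φ) (hφ : ∀ v, ‖φ v‖ ≤ C) :
    Integrable (fun p : M × E => f p.1 * φ p.2) ν :=
  (hf.comp_fst_of_map_fst_eq hν).mul_bdd (hφm.comp measurable_snd).aestronglyMeasurable
    (Eventually.of_forall fun p => hφ p.2)

theorem abs_integral_comp_fst_mul_le (hν : ν.map Prod.fst = μ) {f : M → ℝ}
    (hf : Integrable f μ) (hφ : ∀ v, ‖φ v‖ ≤ C) :
    |∫ p, f p.1 * φ p.2 ∂ν| ≤ C * ∫ x, ‖f x‖ ∂μ := by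
  calc |∫ p, f p.1 * φ p.2 ∂ν| ≤ ∫ p, C * ‖f p.1‖ ∂ν := by
        rw [← Real.norm_eq_abs]
        refine norm_integral_le_of_norm_le ((hf.comp_fst_of_map_fst_eq hν).norm.const_mul C)
          (Eventually.of_forall fun p => ?_)
        rw [norm_mul, mul_comm]
        exact mul_le_mul_of_nonneg_right (hφ p.2) (norm_nonneg _)
    _ = C * ∫ x, ‖f x‖ ∂μ := by
        rw [integral_const_mul, integral_comp_fst_of_map_fst_eq hν hf.1.norm]

theorem abs_integral_comp_fst_mul_sub_le (hν : ν.map Prod.fst = μ) {f g : M → ℝ}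
    (hf : Integrable f μ) (hg : Integrable g μ) (hφm : Measurable φ) (hφ : ∀ v, ‖φ v‖ ≤ C) :
    |∫ p, f p.1 * φ p.2 ∂ν - ∫ p, g p.1 * φ p.2 ∂ν| ≤ C * ∫ x, ‖f x - g x‖ ∂μ := by
  rw [← integral_sub (hf.comp_fst_mul_comp_snd hν hφm hφ) (hg.comp_fst_mul_comp_snd hν hφm hφ)]
  simp_rw [← sub_mul]
  exact abs_integral_comp_fst_mul_le hν (hf.sub hg) hφ

variable [TopologicalSpace M] [NormalSpace M] [BorelSpace M] [μ.WeaklyRegular]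

theorem tendsto_integral_comp_fst_mul {ι : Type*} {l : Filter ι} {ν : ι → Measure (M × E)}
    {ν₀ : Measure (M × E)} (hν : ∀ i, (ν i).map Prod.fst = μ) (hν₀ : ν₀.map Prod.fst = μ)
    (hφm : Measurable φ) (hφ : ∀ v, ‖φ v‖ ≤ C)
    (hconv : ∀ g : M →ᵇ ℝ,
      Tendsto (fun i => ∫ p, g p.1 * φ p.2 ∂ν i) l (𝓝 (∫ p, g p.1 * φ p.2 ∂ν₀)))
    {f : M → ℝ} (hf : Integrable f μ) :
    Tendsto (fun i => ∫ p, f p.1 * φ p.2 ∂ν i) l (𝓝 (∫ p, f p.1 * φ p.2 ∂ν₀)) := by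
  choose g hg_approx hg_int using fun n : ℕ =>
    hf.exists_boundedContinuous_integral_sub_le (Nat.one_div_pos_of_nat (n := n))
  have hL1 : Tendsto (fun n => ∫ x, ‖f x - g n x‖ ∂μ) atTop (𝓝 0) :=
    squeeze_zero (fun n => integral_nonneg fun x => norm_nonneg _) hg_approx
      tendsto_one_div_add_atTop_nhds_zero_nat
  have herr : Tendsto (fun n => C * ∫ x, ‖f x - g n x‖ ∂μ) atTop (𝓝 0) := by
    simpa using hL1.const_mul C
  have hdist : ∀ ν' : Measure (M × E), ν'.map Prod.fst = μ → ∀ n,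
      dist (∫ p, f p.1 * φ p.2 ∂ν') (∫ p, g n p.1 * φ p.2 ∂ν') ≤
        C * ∫ x, ‖f x - g n x‖ ∂μ := fun ν' h n =>
    abs_integral_comp_fst_mul_sub_le h hf (hg_int n) hφm hφ
  have hunif : TendstoUniformly (fun n i => ∫ p, g n p.1 * φ p.2 ∂ν i)
      (fun i => ∫ p, f p.1 * φ p.2 ∂ν i) atTop := by
    rw [Metric.tendstoUniformly_iff]
    intro ε hε
    filter_upwards [herr.eventually (gt_mem_nhds hε)] with n hn i
    exact (hdist _ (hν i) n).trans_lt hn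
  have hlim : Tendsto (fun n => ∫ p, g n p.1 * φ p.2 ∂ν₀) atTop
      (𝓝 (∫ p, f p.1 * φ p.2 ∂ν₀)) := by
    rw [tendsto_iff_dist_tendsto_zero]
    exact squeeze_zero (fun n => dist_nonneg)
      (fun n => by rw [dist_comm]; exact hdist ν₀ hν₀ n) herr
  exact hunif.tendsto_of_eventually_tendsto (Eventually.of_forall fun n => hconv (g n)) hlim

end MeasureTheory

theorem stmt_8_general {M E : Type*} [MetricSpace M]
    [MetricSpace E] [CompactSpace E]
    [MeasurableSpace M] [BorelSpace M] [MeasurableSpace E] [BorelSpace E]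
    (μ : Measure M) [IsProbabilityMeasure μ]
    (mk : ℕ → Measure (M × E)) (m : Measure (M × E))
    (hproj : ∀ k, (mk k).map Prod.fst = μ) (hprojm : m.map Prod.fst = μ)
    (hweak : ∀ ψ : C(M × E, ℝ),
      Tendsto (fun k => ∫ p, ψ p ∂(mk k)) atTop (nhds (∫ p, ψ p ∂m))) :
    ∀ (ρ : Lp ℝ 2 μ) (φ : C(E, ℝ)),
      Tendsto (fun k => ∫ p, ρ p.1 * φ p.2 ∂(mk k)) atTop
        (nhds (∫ p, ρ p.1 * φ p.2 ∂m)) := by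
  intro ρ φ
  exact tendsto_integral_comp_fst_mul hproj hprojm φ.continuous.measurable φ.norm_coe_le_norm
    (fun g => hweak ⟨fun p => g p.1 * φ p.2, by fun_prop⟩) ((Lp.memLp ρ).integrable one_le_two)

/-- Weak* convergence with common projection gives convergence of integrals of
product functions `ρ(x)φ(v)` with `ρ ∈ L²(μ)` and `φ` continuous. -/
theorem stmt_8 {M E : Type*} [MetricSpace M] [CompactSpace M]
    [MetricSpace E] [CompactSpace E]
    [MeasurableSpace M] [BorelSpace M] [MeasurableSpace E] [BorelSpace E]
    (μ : Measure M) [IsProbabilityMeasure μ]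
    (mk : ℕ → Measure (M × E)) (m : Measure (M × E))
    [∀ k, IsProbabilityMeasure (mk k)] [IsProbabilityMeasure m]
    (hproj : ∀ k, (mk k).map Prod.fst = μ) (hprojm : m.map Prod.fst = μ)
    (hweak : ∀ ψ : C(M × E, ℝ),
      Tendsto (fun k => ∫ p, ψ p ∂(mk k)) atTop (nhds (∫ p, ψ p ∂m))) :
    ∀ (ρ : Lp ℝ 2 μ) (φ : C(E, ℝ)),
      Tendsto (fun k => ∫ p, ρ p.1 * φ p.2 ∂(mk k)) atTop
        (nhds (∫ p, ρ p.1 * φ p.2 ∂m)) :=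
  stmt_8_general μ mk m hproj hprojm hweak
end
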